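/- Let G = (V,E) be a finite simple graph with |V| = n, let S ⊆ V be an independent set with |S| = k, let H be a real inner product space, and let x* : V → H be an optimal feasible C-SDP solution for G. Let E'' be a set of pairs (u,v) with u ∈ S, v ∈ V∖S such that {u,v} ∈ E for every (u,v) ∈ E''. Suppose B₁, B₂ ≥ 0 satisfy | k(n−k) − 2·|E''| | ≤ B₁ and | ∑_{(u,v) ∈ E''} ‖x*_u − x*_v‖² − (1/2)·∑_{(u,v) ∈ S × (V∖S)} ‖x*_u − x*_v‖² | ≤ B₂. Then ∑_{(u,v) ∈ S × S} ‖x*_u − x*_v‖² ≤ 4·(B₁ + B₂). -/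

import Mathlib

/-! Collapse the independent set `S` onto one new unit vector orthogonal to `H` and keep the
other vectors. As `S` is independent, the result is still feasible; it puts distance `0` inside
`S` and `2` across the cut, and leaves the rest unchanged, so optimality of `x*` bounds its
`S × S` mass by `4 k (n - k) - 2 ∑_{S × Sᶜ} ‖x*_u - x*_v‖²`. The hypotheses say that the cut
sum is close to `2 k (n - k)`, since every edge of `E''` contributes exactly `2`. -/

open Finset

/-- A feasible solution to the crude SDP: unit vectors, pairwise nonnegative inner
products, and orthogonal vectors on edges. -/
def Feasible {V : Type*} {H : Type*} [NormedAddCommGroup H] [InnerProductSpace ℝ H]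
    (G : SimpleGraph V) (x : V → H) : Prop :=
  (∀ v, ‖x v‖ = 1) ∧ (∀ u v : V, (0 : ℝ) ≤ inner ℝ (x u) (x v)) ∧
    (∀ u v : V, G.Adj u v → (inner ℝ (x u) (x v) : ℝ) = 0)

/-- The crude SDP objective: the sum of squared distances over all ordered pairs. -/
noncomputable def obj {V : Type*} [Fintype V] {H : Type*} [NormedAddCommGroup H]
    [InnerProductSpace ℝ H] (x : V → H) : ℝ :=
  ∑ u : V, ∑ v : V, ‖x u - x v‖ ^ 2

theorem Finset.sum_univ_sum_univ_eq_of_symm {V R : Type*} [Fintype V] [DecidableEq V]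
    [CommSemiring R] (S : Finset V) (f : V → V → R) (hf : ∀ u v, f u v = f v u) :
    ∑ u, ∑ v, f u v =
      ∑ u ∈ S, ∑ v ∈ S, f u v + 2 * ∑ u ∈ S, ∑ v ∈ Sᶜ, f u v + ∑ u ∈ Sᶜ, ∑ v ∈ Sᶜ, f u v := by
  have hswap : ∑ u ∈ Sᶜ, ∑ v ∈ S, f u v = ∑ u ∈ S, ∑ v ∈ Sᶜ, f u v := by
    rw [Finset.sum_comm]
    exact sum_congr rfl fun u _ => sum_congr rfl fun v _ => hf v u
  simp only [← sum_add_sum_compl S, sum_add_distrib, hswap]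
  ring

theorem Feasible.norm_sub_sq_of_adj {V H : Type*} [NormedAddCommGroup H] [InnerProductSpace ℝ H]
    {G : SimpleGraph V} {x : V → H} (hx : Feasible G x) {u v : V} (h : G.Adj u v) :
    ‖x u - x v‖ ^ 2 = 2 := by
  rw [norm_sub_sq_real, hx.1, hx.1, hx.2.2 u v h]
  norm_num

section

variable {V H : Type*} [NormedAddCommGroup H] [DecidableEq V]

noncomputable def collapseOn (S : Finset V) (x : V → H) : V → WithLp 2 (H × ℝ) :=
  fun v => if v ∈ S then WithLp.toLp 2 (0, 1) else WithLp.toLp 2 (x v, 0)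

variable {S : Finset V} {x : V → H}

theorem norm_collapseOn_sub_sq_of_mem_of_notMem {u v : V} (hu : u ∈ S) (hv : v ∉ S) :
    ‖collapseOn S x u - collapseOn S x v‖ ^ 2 = ‖x v‖ ^ 2 + 1 := by
  simp [collapseOn, hu, hv, WithLp.prod_norm_sq_eq_of_L2]

theorem norm_collapseOn_sub_sq_of_notMem {u v : V} (hu : u ∉ S) (hv : v ∉ S) :
    ‖collapseOn S x u - collapseOn S x v‖ ^ 2 = ‖x u - x v‖ ^ 2 := by
  simp [collapseOn, hu, hv, WithLp.prod_norm_sq_eq_of_L2]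

variable [InnerProductSpace ℝ H] {G : SimpleGraph V}

theorem Feasible.collapseOn (hx : Feasible G x) (hS : ∀ u ∈ S, ∀ v ∈ S, ¬ G.Adj u v) :
    Feasible G (collapseOn S x) := by
  obtain ⟨hnorm, hpos, hedge⟩ := hx
  refine ⟨fun v => ?_, fun u v => ?_, fun u v huv => ?_⟩
  · by_cases hv : v ∈ S <;> simp [_root_.collapseOn, hv, hnorm]
  · by_cases hu : u ∈ S <;> by_cases hv : v ∈ S <;> simp [_root_.collapseOn, hu, hv, hpos]
  · by_cases hu : u ∈ S <;> by_cases hv : v ∈ S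
    · exact absurd huv (hS u hu v hv)
    all_goals simp [_root_.collapseOn, hu, hv, hedge u v huv]

variable [Fintype V]

theorem obj_eq_blocks (S : Finset V) {E : Type*} [NormedAddCommGroup E] [InnerProductSpace ℝ E]
    (y : V → E) :
    obj y = ∑ u ∈ S, ∑ v ∈ S, ‖y u - y v‖ ^ 2 + 2 * ∑ u ∈ S, ∑ v ∈ Sᶜ, ‖y u - y v‖ ^ 2 +
      ∑ u ∈ Sᶜ, ∑ v ∈ Sᶜ, ‖y u - y v‖ ^ 2 :=
  S.sum_univ_sum_univ_eq_of_symm _ fun u v => by rw [norm_sub_rev]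

theorem obj_collapseOn (hx : ∀ v, ‖x v‖ = 1) :
    obj (collapseOn S x) = 4 * (#S * #Sᶜ) + ∑ u ∈ Sᶜ, ∑ v ∈ Sᶜ, ‖x u - x v‖ ^ 2 := by
  have hin : ∀ u ∈ S, ∀ v ∈ S, ‖collapseOn S x u - collapseOn S x v‖ ^ 2 = 0 := by
    intro u hu v hv
    simp [collapseOn, hu, hv]
  have hacross : ∀ u ∈ S, ∀ v ∈ Sᶜ, ‖collapseOn S x u - collapseOn S x v‖ ^ 2 = 2 := by
    intro u hu v hv
    rw [norm_collapseOn_sub_sq_of_mem_of_notMem hu (mem_compl.1 hv), hx]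
    norm_num
  have hout : ∀ u ∈ Sᶜ, ∀ v ∈ Sᶜ,
      ‖collapseOn S x u - collapseOn S x v‖ ^ 2 = ‖x u - x v‖ ^ 2 := fun u hu v hv =>
    norm_collapseOn_sub_sq_of_notMem (mem_compl.1 hu) (mem_compl.1 hv)
  rw [obj_eq_blocks S, sum_congr rfl fun u hu => sum_congr rfl (hin u hu),
    sum_congr rfl fun u hu => sum_congr rfl (hacross u hu),
    sum_congr rfl fun u hu => sum_congr rfl (hout u hu)]
  simp only [sum_const_zero, sum_const, nsmul_eq_mul, mul_comm (#Sᶜ : ℝ) 2]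
  ring

theorem sum_within_add_two_mul_sum_across_le_of_optimal (hx : Feasible G x)
    (hopt : ∀ y : V → WithLp 2 (H × ℝ), Feasible G y → obj x ≤ obj y)
    (hS : ∀ u ∈ S, ∀ v ∈ S, ¬ G.Adj u v) :
    ∑ u ∈ S, ∑ v ∈ S, ‖x u - x v‖ ^ 2 + 2 * ∑ u ∈ S, ∑ v ∈ Sᶜ, ‖x u - x v‖ ^ 2 ≤
      4 * (#S * #Sᶜ) := by
  have h := hopt _ (hx.collapseOn hS)
  rw [obj_collapseOn hx.1, obj_eq_blocks S] at h
  linarith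

end

theorem stmt5_general {V : Type*} [Fintype V] [DecidableEq V] (G : SimpleGraph V)
    {H : Type*} [NormedAddCommGroup H] [InnerProductSpace ℝ H]
    (n k : ℕ) (hn : Fintype.card V = n) (S : Finset V) (hk : S.card = k)
    (hind : ∀ u ∈ S, ∀ v ∈ S, ¬ G.Adj u v)
    (x : V → H) (hfeas : Feasible G x)
    (hopt : ∀ y : V → WithLp 2 (H × ℝ), Feasible G y → obj x ≤ obj y)
    (E'' : Finset (V × V))
    (hE2 : ∀ p ∈ E'', G.Adj p.1 p.2)
    (B₁ B₂ : ℝ)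
    (h₁ : |(k : ℝ) * ((n : ℝ) - k) - 2 * (E''.card : ℝ)| ≤ B₁)
    (h₂ : |(∑ p ∈ E'', ‖x p.1 - x p.2‖ ^ 2) -
        (1 / 2) * ∑ u ∈ S, ∑ v ∈ Sᶜ, ‖x u - x v‖ ^ 2| ≤ B₂) :
    ∑ u ∈ S, ∑ v ∈ S, ‖x u - x v‖ ^ 2 ≤ 4 * (B₁ + B₂) := by
  have hedges : ∑ p ∈ E'', ‖x p.1 - x p.2‖ ^ 2 = 2 * #E'' := by
    rw [sum_congr rfl fun p hp => hfeas.norm_sub_sq_of_adj (hE2 p hp), sum_const, nsmul_eq_mul,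
      mul_comm]
  have hcompl : (#Sᶜ : ℝ) = n - k := by
    rw [card_compl, hk, hn, Nat.cast_sub (hn ▸ hk ▸ S.card_le_univ)]
  have hkey := sum_within_add_two_mul_sum_across_le_of_optimal hfeas hopt hind
  rw [hcompl, hk] at hkey
  rw [hedges] at h₂
  linarith [(abs_le.1 h₁).2, (abs_le.1 h₂).2]

theorem stmt5 {V : Type*} [Fintype V] [DecidableEq V] (G : SimpleGraph V)
    {H : Type*} [NormedAddCommGroup H] [InnerProductSpace ℝ H]
    (n k : ℕ) (hn : Fintype.card V = n) (S : Finset V) (hk : S.card = k)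
    (hind : ∀ u ∈ S, ∀ v ∈ S, ¬ G.Adj u v)
    (x : V → H) (hfeas : Feasible G x)
    (hopt : ∀ y : V → WithLp 2 (H × ℝ), Feasible G y → obj x ≤ obj y)
    (E'' : Finset (V × V))
    (hE1 : ∀ p ∈ E'', p.1 ∈ S ∧ p.2 ∉ S)
    (hE2 : ∀ p ∈ E'', G.Adj p.1 p.2)
    (B₁ B₂ : ℝ) (hB₁ : 0 ≤ B₁) (hB₂ : 0 ≤ B₂)
    (h₁ : |(k : ℝ) * ((n : ℝ) - k) - 2 * (E''.card : ℝ)| ≤ B₁)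
    (h₂ : |(∑ p ∈ E'', ‖x p.1 - x p.2‖ ^ 2) -
        (1 / 2) * ∑ u ∈ S, ∑ v ∈ Sᶜ, ‖x u - x v‖ ^ 2| ≤ B₂) :
    ∑ u ∈ S, ∑ v ∈ S, ‖x u - x v‖ ^ 2 ≤ 4 * (B₁ + B₂) :=
  stmt5_general G n k hn S hk hind x hfeas hopt E'' hE2 B₁ B₂ h₁ h₂
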